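/- Consider the family of complex Lie algebras (t ∈ ℂ small enough) with (1,0)-form basis φ¹_t,...,φ⁴_t satisfying dφ¹_t = dφ²_t = 0, dφ³_t = -((1-|t₁₁t₂₂|²)/((1-|t₁₁|²)(1-|t₂₂|²)))·φ¹²_t + (t₂₂/(1-|t₂₂|²))·φ^{1 2̄}_t - (t₁₁/(1-|t₁₁|²))·φ^{2 1̄}_t, dφ⁴_t = 0. If t₁₁·t₂₂ ≠ 0, then every closed invariant (2,0)-form Ω satisfies Ω ∧ Ω = 0. -/

import Mathlib

/-
Model: exterior algebra over ℂ on generators gen 0..3 = φ¹..φ⁴, gen 4..7 = φ̄¹..φ̄⁴;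
d determined by the structure equations (and their conjugates) and the Leibniz rule.
-/

noncomputable section

abbrev E := ExteriorAlgebra ℂ (Fin 8 → ℂ)

def gen (i : Fin 8) : E := ExteriorAlgebra.ι ℂ (Pi.single i 1)

def K (t11 t22 : ℂ) : ℂ :=
  (1 - (Complex.normSq (t11 * t22) : ℂ)) /
    ((1 - (Complex.normSq t11 : ℂ)) * (1 - (Complex.normSq t22 : ℂ)))

def cA (t22 : ℂ) : ℂ := t22 / (1 - (Complex.normSq t22 : ℂ))

def cB (t11 : ℂ) : ℂ := t11 / (1 - (Complex.normSq t11 : ℂ))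

def dgen (t11 t22 : ℂ) : Fin 8 → E :=
  ![0, 0,
    (-(K t11 t22)) • (gen 0 * gen 1) + (cA t22) • (gen 0 * gen 5)
      - (cB t11) • (gen 1 * gen 4),
    0, 0, 0,
    (-(K t11 t22)) • (gen 4 * gen 5) + ((starRingEnd ℂ) (cA t22)) • (gen 4 * gen 1)
      - ((starRingEnd ℂ) (cB t11)) • (gen 5 * gen 0),
    0]

def d2 (t11 t22 : ℂ) (i j : Fin 8) : E :=
  dgen t11 t22 i * gen j - gen i * dgen t11 t22 j

/-- generic invariant (2,0)-form Ω = α φ¹² + β φ¹³ + γ φ¹⁴ + τ φ²³ + θ φ²⁴ + ζ φ³⁴. -/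
def Om (a b c d e f : ℂ) : E :=
  a • (gen 0 * gen 1) + b • (gen 0 * gen 2) + c • (gen 0 * gen 3) +
  d • (gen 1 * gen 2) + e • (gen 1 * gen 3) + f • (gen 2 * gen 3)

def dOm (t11 t22 a b c d e f : ℂ) : E :=
  a • d2 t11 t22 0 1 + b • d2 t11 t22 0 2 + c • d2 t11 t22 0 3 +
  d • d2 t11 t22 1 2 + e • d2 t11 t22 1 3 + f • d2 t11 t22 2 3

/-!
Closedness of Ω only involves dφ³, and reading off the coefficients of φ¹²φ̄¹, φ¹²φ̄² and φ¹²⁴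
in dΩ gives β t₁₁ = τ t₂₂ = ζ = 0. On the other hand Ω ∧ Ω is the Pfaffian multiple
2(αζ - βθ + γτ) φ¹²³⁴, which therefore vanishes once t₁₁ t₂₂ ≠ 0.
-/

namespace ExteriorAlgebra

variable {R κ : Type*} [CommRing R]

/-- On a monomial `eₐ ∧ e_b ∧ e_c` of basis vectors this is its coefficient at
`e_{s 0} ∧ e_{s 1} ∧ e_{s 2}`. -/
def coeff3 (s : Fin 3 → κ) : ExteriorAlgebra R (κ → R) →ₗ[R] R :=
  liftAlternating fun n => match n with
    | 3 => Matrix.detRowAlternating.compLinearMap (LinearMap.funLeft R R s)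
    | _ => 0

theorem coeff3_ι_mul_ι_mul_ι (s : Fin 3 → κ) (u v w : κ → R) :
    coeff3 s (ι R u * (ι R v * ι R w)) = (Matrix.of fun i j => ![u, v, w] i (s j)).det := by
  have h : ι R u * (ι R v * ι R w) = ιMulti R 3 ![u, v, w] := by
    simp [ιMulti_apply]
  rw [h, coeff3, liftAlternating_apply_ιMulti]
  rfl

end ExteriorAlgebra

open ExteriorAlgebra

theorem gen_mul_self (i : Fin 8) : gen i * gen i = 0 := ι_sq_zero _

theorem gen_mul_gen_mul_self (i : Fin 8) (a : E) : gen i * (gen i * a) = 0 := by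
  rw [← mul_assoc, gen_mul_self, zero_mul]

theorem coeff3_gen_mul_gen_mul_gen (s : Fin 3 → Fin 8) (a b c : Fin 8) :
    coeff3 s (gen a * (gen b * gen c))
      = (Matrix.of fun i j => (Pi.single (![a, b, c] i) 1 : Fin 8 → ℂ) (s j)).det := by
  rw [gen, gen, gen, coeff3_ι_mul_ι_mul_ι]
  congr 2
  ext i j
  fin_cases i <;> rfl

theorem Om_mul_self (a b c d e f : ℂ) :
    Om a b c d e f * Om a b c d e f
      = (2 * (a * f - b * e + c * d)) • (gen 0 * (gen 1 * (gen 2 * gen 3))) := by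
  -- the order hypotheses only steer `simp` towards increasing monomials
  have swap : ∀ i j : Fin 8, j < i → gen i * gen j = -(gen j * gen i) :=
    fun _ _ _ => CliffordAlgebra.ι_mul_ι_comm_of_isOrtho (.all _ _)
  have swap_mul : ∀ i j : Fin 8, j < i → ∀ x : E, gen i * (gen j * x) = -(gen j * (gen i * x)) :=
    fun _ _ _ x => CliffordAlgebra.ι_mul_ι_mul_of_isOrtho x (.all _ _)
  simp only [Om, add_mul, mul_add, smul_mul_smul_comm, mul_assoc]
  simp (disch := decide) only [swap, swap_mul, gen_mul_self, gen_mul_gen_mul_self, mul_neg,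
    neg_neg, mul_zero, smul_zero, smul_neg, add_zero, zero_add]
  module

theorem dOm_eq (t11 t22 α β γ τ θ ζ : ℂ) :
    dOm t11 t22 α β γ τ θ ζ
      = (β * cB t11) • (gen 0 * (gen 1 * gen 4)) + (τ * cA t22) • (gen 0 * (gen 1 * gen 5))
        - (ζ * K t11 t22) • (gen 0 * (gen 1 * gen 3)) - (ζ * cA t22) • (gen 0 * (gen 3 * gen 5))
        + (ζ * cB t11) • (gen 1 * (gen 3 * gen 4)) := by
  have swap : ∀ i j : Fin 8, j < i → gen i * gen j = -(gen j * gen i) :=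
    fun _ _ _ => CliffordAlgebra.ι_mul_ι_comm_of_isOrtho (.all _ _)
  have swap_mul : ∀ i j : Fin 8, j < i → ∀ x : E, gen i * (gen j * x) = -(gen j * (gen i * x)) :=
    fun _ _ _ x => CliffordAlgebra.ι_mul_ι_mul_of_isOrtho x (.all _ _)
  simp only [dOm, d2, dgen, Matrix.cons_val, zero_mul, mul_zero, sub_zero, zero_sub, smul_zero,
    add_zero, zero_add, add_mul, mul_add, sub_mul, mul_sub, smul_mul_assoc, mul_smul_comm,
    mul_assoc]
  simp (disch := decide) only [swap, swap_mul, gen_mul_self, gen_mul_gen_mul_self, mul_neg,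
    neg_neg, mul_zero, smul_zero, smul_neg, add_zero, zero_add, sub_zero, zero_sub, neg_zero]
  module

theorem coeffs_eq_zero_of_dOm_eq_zero {t11 t22 α β γ τ θ ζ : ℂ}
    (h : dOm t11 t22 α β γ τ θ ζ = 0) :
    β * cB t11 = 0 ∧ τ * cA t22 = 0 ∧ ζ * K t11 t22 = 0 := by
  rw [dOm_eq] at h
  have coeff (s : Fin 3 → Fin 8) := congrArg (coeff3 s) h
  simp only [map_add, map_sub, map_smul, map_zero, coeff3_gen_mul_gen_mul_gen,
    Matrix.det_fin_three, Pi.single_apply] at coeff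
  refine ⟨?_, ?_, ?_⟩
  · simpa using coeff ![0, 1, 4]
  · simpa using coeff ![0, 1, 5]
  · simpa using coeff ![0, 1, 3]

theorem one_sub_normSq_ne_zero {t : ℂ} (h : ‖t‖ < 1) : 1 - (Complex.normSq t : ℂ) ≠ 0 := by
  rw [sub_ne_zero, ne_comm, ← Complex.ofReal_one, Ne, Complex.ofReal_inj, Complex.normSq_eq_norm_sq]
  nlinarith [norm_nonneg t]

theorem cA_ne_zero {t : ℂ} (h : ‖t‖ < 1) (ht : t ≠ 0) : cA t ≠ 0 :=
  div_ne_zero ht (one_sub_normSq_ne_zero h)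

theorem cB_ne_zero {t : ℂ} (h : ‖t‖ < 1) (ht : t ≠ 0) : cB t ≠ 0 :=
  div_ne_zero ht (one_sub_normSq_ne_zero h)

theorem K_ne_zero {t11 t22 : ℂ} (h11 : ‖t11‖ < 1) (h22 : ‖t22‖ < 1) (hprod : ‖t11 * t22‖ < 1) :
    K t11 t22 ≠ 0 :=
  div_ne_zero (one_sub_normSq_ne_zero hprod)
    (mul_ne_zero (one_sub_normSq_ne_zero h11) (one_sub_normSq_ne_zero h22))

theorem stmt5 (t11 t22 : ℂ)
    (h11 : ‖t11‖ < 1) (h22 : ‖t22‖ < 1)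
    (hprod : ‖t11 * t22‖ < 1) (hne : t11 * t22 ≠ 0) :
    ∀ α β γ τ θ ζ : ℂ, dOm t11 t22 α β γ τ θ ζ = 0 →
      Om α β γ τ θ ζ * Om α β γ τ θ ζ = 0 := by
  intro α β γ τ θ ζ hclosed
  obtain ⟨hβ, hτ, hζ⟩ := coeffs_eq_zero_of_dOm_eq_zero hclosed
  obtain rfl : β = 0 :=
    (mul_eq_zero.1 hβ).resolve_right (cB_ne_zero h11 (left_ne_zero_of_mul hne))
  obtain rfl : τ = 0 :=
    (mul_eq_zero.1 hτ).resolve_right (cA_ne_zero h22 (right_ne_zero_of_mul hne))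
  obtain rfl : ζ = 0 := (mul_eq_zero.1 hζ).resolve_right (K_ne_zero h11 h22 hprod)
  simp [Om_mul_self]

end
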